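/- Let $(\mathbf{x},\mathbf{u})$ be an admissible process for the bilinear state equation, and let the differentiable symmetric matrix function $\mathbf{P}:\mathbb{R}\to\mathbb{R}^{n\times n}$ and differentiable $\mathbf{p}:\mathbb{R}\to\mathbb{R}^n$ satisfy $\dot{\mathbf{P}}(t)=-\mathbf{P}(t)(\mathbf{A}(t)+\{\mathbf{u}\mathbf{N}(t)\})-(\mathbf{A}(t)+\{\mathbf{u}\mathbf{N}(t)\})^T\mathbf{P}(t)-\mathbf{Q}(t)$ and $\dot{\mathbf{p}}(t)=-(\mathbf{A}(t)+\{\mathbf{u}\mathbf{N}(t)\})^T\mathbf{p}(t)-\mathbf{P}(t)(\mathbf{B}(t)\mathbf{u}(t)+\mathbf{g}(t))$ on $(0,t_f)$. Set $q(t,\xi)=\tfrac12\xi^T\mathbf{P}(t)\xi+\mathbf{p}(t)^T\xi$ and $s(t,\xi,\nu)=\tfrac12\xi^T\mathbf{Q}(t)\xi+\tfrac12\nu^T\mathbf{R}(t)\nu+q_t(t,\xi)+q_{\mathbf{x}}(t,\xi)\cdot(\mathbf{A}(t)\xi+\mathbf{B}(t)\nu+\{\nu\mathbf{N}(t)\}\xi+\mathbf{g}(t))$.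 Then for every $t\in(0,t_f)$ and every $\xi\in\mathbb{R}^n$, $s(t,\xi,\mathbf{u}(t))=\mathbf{p}(t)^T(\mathbf{B}(t)\mathbf{u}(t)+\mathbf{g}(t))+\tfrac12\mathbf{u}(t)^T\mathbf{R}(t)\mathbf{u}(t)$; in particular $s(t,\xi,\mathbf{u}(t))=s(t,\mathbf{x}(t),\mathbf{u}(t))$ for all $\xi\in\mathbb{R}^n$, so $s(t,\cdot,\mathbf{u}(t))$ attains its maximum at $\mathbf{x}(t)$. -/

import Mathlib

open MeasureTheory Set Matrix

/-- `{νN(t)} = ∑ᵢ νᵢ Nᵢ(t)`. -/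
noncomputable def uN {n nu : ℕ} (N : Fin nu → ℝ → Matrix (Fin n) (Fin n) ℝ)
    (ν : Fin nu → ℝ) (t : ℝ) : Matrix (Fin n) (Fin n) ℝ :=
  ∑ i, ν i • N i t

/-- The quadratic improving function `q(t,ξ) = ½ ξᵀP(t)ξ + p(t)ᵀξ`. -/
noncomputable def qQuad {n : ℕ} (P : ℝ → Matrix (Fin n) (Fin n) ℝ)
    (p : ℝ → Fin n → ℝ) (t : ℝ) (ξ : Fin n → ℝ) : ℝ :=
  (1 / 2) * (ξ ⬝ᵥ (P t *ᵥ ξ)) + p t ⬝ᵥ ξ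

/-- The bilinear vector field `f(t,ξ,ν) = A(t)ξ + B(t)ν + {νN(t)}ξ + g(t)`. -/
noncomputable def fBil {n nu : ℕ}
    (A : ℝ → Matrix (Fin n) (Fin n) ℝ) (B : ℝ → Matrix (Fin n) (Fin nu) ℝ)
    (N : Fin nu → ℝ → Matrix (Fin n) (Fin n) ℝ) (g : ℝ → Fin n → ℝ)
    (t : ℝ) (ξ : Fin n → ℝ) (ν : Fin nu → ℝ) : Fin n → ℝ :=
  A t *ᵥ ξ + B t *ᵥ ν + uN N ν t *ᵥ ξ + g t

/-- Krotov's `s` function for the CBQR problem: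
`s(t,ξ,ν) = ½ξᵀQ(t)ξ + ½νᵀR(t)ν + q_t(t,ξ) + q_x(t,ξ)·(A(t)ξ + B(t)ν + {νN(t)}ξ + g(t))`. -/
noncomputable def sCBQR {n nu : ℕ}
    (A : ℝ → Matrix (Fin n) (Fin n) ℝ) (B : ℝ → Matrix (Fin n) (Fin nu) ℝ)
    (N : Fin nu → ℝ → Matrix (Fin n) (Fin n) ℝ) (g : ℝ → Fin n → ℝ)
    (Q : ℝ → Matrix (Fin n) (Fin n) ℝ) (R : ℝ → Matrix (Fin nu) (Fin nu) ℝ)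
    (P : ℝ → Matrix (Fin n) (Fin n) ℝ) (p : ℝ → Fin n → ℝ)
    (t : ℝ) (ξ : Fin n → ℝ) (ν : Fin nu → ℝ) : ℝ :=
  (1 / 2) * (ξ ⬝ᵥ (Q t *ᵥ ξ)) + (1 / 2) * (ν ⬝ᵥ (R t *ᵥ ν)) +
    deriv (fun τ => qQuad P p τ ξ) t +
    fderiv ℝ (qQuad P p t) ξ (fBil A B N g t ξ ν)

/-!
Along the process, the time derivative of `q` contributes `½ξᵀṖξ + ṗᵀξ` and its state
derivative contributes `(Pξ + p)ᵀ((A + {uN})ξ + Bu + g)`. Substituting the differential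
equations for `P` and `p`, the quadratic terms in `ξ` cancel against `½ξᵀQξ`, and, since `P`
is symmetric, the linear terms cancel as well, leaving `pᵀ(Bu + g) + ½uᵀRu`.
-/

section CurveDerivatives

variable {𝕜 ι κ : Type*} [NontriviallyNormedField 𝕜] [Fintype ι] {t : 𝕜}

theorem hasDerivAt_dotProduct {f g : 𝕜 → ι → 𝕜} {f' g' : ι → 𝕜}
    (hf : HasDerivAt f f' t) (hg : HasDerivAt g g' t) :
    HasDerivAt (fun τ => f τ ⬝ᵥ g τ) (f' ⬝ᵥ g t + f t ⬝ᵥ g') t := by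
  simp only [dotProduct, ← Finset.sum_add_distrib]
  exact HasDerivAt.fun_sum fun i _ => (hasDerivAt_pi.1 hf i).mul (hasDerivAt_pi.1 hg i)

theorem hasDerivAt_mulVec {M : 𝕜 → Matrix κ ι 𝕜} {M' : Matrix κ ι 𝕜} {v : 𝕜 → ι → 𝕜}
    {v' : ι → 𝕜} (hM : ∀ i j, HasDerivAt (fun τ => M τ i j) (M' i j) t)
    (hv : HasDerivAt v v' t) :
    HasDerivAt (fun τ => M τ *ᵥ v τ) (M' *ᵥ v t + M t *ᵥ v') t :=
  hasDerivAt_pi.2 fun i => hasDerivAt_dotProduct (hasDerivAt_pi.2 (hM i)) hv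

end CurveDerivatives

section Quadratic

variable {n : ℕ} {P : ℝ → Matrix (Fin n) (Fin n) ℝ} {p : ℝ → Fin n → ℝ} {t : ℝ}

theorem hasDerivAt_qQuad_time {P' : Matrix (Fin n) (Fin n) ℝ} {p' : Fin n → ℝ}
    (hP : ∀ i j, HasDerivAt (fun τ => P τ i j) (P' i j) t)
    (hp : ∀ i, HasDerivAt (fun τ => p τ i) (p' i) t) (ξ : Fin n → ℝ) :
    HasDerivAt (fun τ => qQuad P p τ ξ) ((1 / 2) * (ξ ⬝ᵥ (P' *ᵥ ξ)) + p' ⬝ᵥ ξ) t := by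
  have hPξ := hasDerivAt_mulVec hP (hasDerivAt_const t ξ)
  have := ((hasDerivAt_dotProduct (hasDerivAt_const t ξ) hPξ).const_mul (1 / 2)).fun_add
    (hasDerivAt_dotProduct (hasDerivAt_pi.2 hp) (hasDerivAt_const t ξ))
  simpa [qQuad] using this

theorem hasLineDerivAt_qQuad (ξ v : Fin n → ℝ) :
    HasLineDerivAt ℝ (qQuad P p t)
      ((1 / 2) * (v ⬝ᵥ (P t *ᵥ ξ) + ξ ⬝ᵥ (P t *ᵥ v)) + p t ⬝ᵥ v) ξ v := by
  have hline : HasDerivAt (fun s : ℝ => ξ + s • v) v 0 := by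
    simpa using ((hasDerivAt_id (0 : ℝ)).smul_const v).const_add ξ
  have hPline := hasDerivAt_mulVec (M' := (0 : Matrix (Fin n) (Fin n) ℝ))
    (fun i j => hasDerivAt_const (0 : ℝ) (P t i j)) hline
  have := ((hasDerivAt_dotProduct hline hPline).const_mul (1 / 2)).fun_add
    (hasDerivAt_dotProduct (hasDerivAt_const (0 : ℝ) (p t)) hline)
  simpa [HasLineDerivAt, qQuad] using this

theorem differentiable_qQuad : Differentiable ℝ (qQuad P p t) := by
  unfold qQuad mulVec dotProduct
  fun_prop

theorem fderiv_qQuad_apply (ξ v : Fin n → ℝ) :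
    fderiv ℝ (qQuad P p t) ξ v =
      (1 / 2) * (v ⬝ᵥ (P t *ᵥ ξ) + ξ ⬝ᵥ (P t *ᵥ v)) + p t ⬝ᵥ v := by
  rw [← differentiable_qQuad.differentiableAt.lineDeriv_eq_fderiv]
  exact (hasLineDerivAt_qQuad ξ v).lineDeriv

end Quadratic

section Algebra

variable {K ι : Type*} [Fintype ι]

theorem Matrix.IsSymm.dotProduct_mulVec_comm [CommSemiring K] {P : Matrix ι ι K} (hP : P.IsSymm)
    (x y : ι → K) :
    x ⬝ᵥ (P *ᵥ y) = y ⬝ᵥ (P *ᵥ x) := by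
  simpa only [hP.eq] using dotProduct_transpose_mulVec P x y

theorem lyapunov_terms_cancel [Field K] [CharZero K] {P M Q : Matrix ι ι K} (hP : P.IsSymm)
    (p w ξ : ι → K) :
    (1 / 2) * (ξ ⬝ᵥ ((-(P * M) - Mᵀ * P - Q) *ᵥ ξ)) + (-(Mᵀ *ᵥ p) - P *ᵥ w) ⬝ᵥ ξ +
        ((1 / 2) * ((M *ᵥ ξ + w) ⬝ᵥ (P *ᵥ ξ) + ξ ⬝ᵥ (P *ᵥ (M *ᵥ ξ + w))) +
          p ⬝ᵥ (M *ᵥ ξ + w)) =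
      p ⬝ᵥ w - (1 / 2) * (ξ ⬝ᵥ (Q *ᵥ ξ)) := by
  simp only [sub_mulVec, neg_mulVec, ← mulVec_mulVec, dotProduct_sub, dotProduct_neg,
    sub_dotProduct, neg_dotProduct, add_dotProduct, dotProduct_add, mulVec_add]
  rw [dotProduct_transpose_mulVec, dotProduct_comm (Mᵀ *ᵥ p), dotProduct_transpose_mulVec,
    dotProduct_comm (P *ᵥ w), hP.dotProduct_mulVec_comm w, dotProduct_comm (P *ᵥ ξ),
    hP.dotProduct_mulVec_comm (M *ᵥ ξ)]
  ring

end Algebra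

section CBQR

variable {n nu : ℕ} {A : ℝ → Matrix (Fin n) (Fin n) ℝ} {B : ℝ → Matrix (Fin n) (Fin nu) ℝ}
  {N : Fin nu → ℝ → Matrix (Fin n) (Fin n) ℝ} {g : ℝ → Fin n → ℝ}

theorem fBil_eq_mulVec_add (t : ℝ) (ξ : Fin n → ℝ) (ν : Fin nu → ℝ) :
    fBil A B N g t ξ ν = (A t + uN N ν t) *ᵥ ξ + (B t *ᵥ ν + g t) := by
  rw [fBil, add_mulVec]
  abel

theorem sCBQR_eq_of_hasDerivAt {Q : ℝ → Matrix (Fin n) (Fin n) ℝ}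
    {R : ℝ → Matrix (Fin nu) (Fin nu) ℝ} {P : ℝ → Matrix (Fin n) (Fin n) ℝ} {p : ℝ → Fin n → ℝ}
    {t : ℝ} {P' : Matrix (Fin n) (Fin n) ℝ} {p' : Fin n → ℝ}
    (hP : ∀ i j, HasDerivAt (fun τ => P τ i j) (P' i j) t)
    (hp : ∀ i, HasDerivAt (fun τ => p τ i) (p' i) t) (ξ : Fin n → ℝ) (ν : Fin nu → ℝ) :
    let f := (A t + uN N ν t) *ᵥ ξ + (B t *ᵥ ν + g t)
    sCBQR A B N g Q R P p t ξ ν =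
      (1 / 2) * (ξ ⬝ᵥ (Q t *ᵥ ξ)) + (1 / 2) * (ν ⬝ᵥ (R t *ᵥ ν)) +
        ((1 / 2) * (ξ ⬝ᵥ (P' *ᵥ ξ)) + p' ⬝ᵥ ξ) +
        ((1 / 2) * (f ⬝ᵥ (P t *ᵥ ξ) + ξ ⬝ᵥ (P t *ᵥ f)) + p t ⬝ᵥ f) := by
  rw [sCBQR, (hasDerivAt_qQuad_time hP hp ξ).deriv, fderiv_qQuad_apply, fBil_eq_mulVec_add]

end CBQR

theorem cbqr_s_state_independent_general {n nu : ℕ} (tf : ℝ)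
    (A : ℝ → Matrix (Fin n) (Fin n) ℝ) (B : ℝ → Matrix (Fin n) (Fin nu) ℝ)
    (N : Fin nu → ℝ → Matrix (Fin n) (Fin n) ℝ) (g : ℝ → Fin n → ℝ)
    (Q : ℝ → Matrix (Fin n) (Fin n) ℝ) (R : ℝ → Matrix (Fin nu) (Fin nu) ℝ)
    (x : ℝ → Fin n → ℝ) (u : ℝ → Fin nu → ℝ)
    (P : ℝ → Matrix (Fin n) (Fin n) ℝ) (p : ℝ → Fin n → ℝ)
    (hPsymm : ∀ t, (P t).IsSymm)
    -- `Ṗ(t) = -P(t)(A(t)+{uN(t)}) - (A(t)+{uN(t)})ᵀP(t) - Q(t)` on `(0,t_f)`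
    (hP : ∀ t ∈ Ioo 0 tf, ∀ i j, HasDerivAt (fun τ => P τ i j)
        ((-(P t * (A t + uN N (u t) t)) - (A t + uN N (u t) t)ᵀ * P t - Q t) i j) t)
    -- `ṗ(t) = -(A(t)+{uN(t)})ᵀp(t) - P(t)(B(t)u(t)+g(t))` on `(0,t_f)`
    (hp : ∀ t ∈ Ioo 0 tf, ∀ i, HasDerivAt (fun τ => p τ i)
        ((-((A t + uN N (u t) t)ᵀ *ᵥ p t) - P t *ᵥ (B t *ᵥ u t + g t)) i) t) :
    ∀ t ∈ Ioo 0 tf, ∀ ξ : Fin n → ℝ,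
      sCBQR A B N g Q R P p t ξ (u t) =
          p t ⬝ᵥ (B t *ᵥ u t + g t) + (1 / 2) * (u t ⬝ᵥ (R t *ᵥ u t)) ∧
      sCBQR A B N g Q R P p t ξ (u t) = sCBQR A B N g Q R P p t (x t) (u t) := by
  intro t ht ξ
  have hs : ∀ ζ, sCBQR A B N g Q R P p t ζ (u t) =
      p t ⬝ᵥ (B t *ᵥ u t + g t) + (1 / 2) * (u t ⬝ᵥ (R t *ᵥ u t)) := fun ζ => by
    rw [sCBQR_eq_of_hasDerivAt (hP t ht) (hp t ht)]
    linarith [lyapunov_terms_cancel (M := A t + uN N (u t) t) (Q := Q t) (hPsymm t) (p t)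
      (B t *ᵥ u t + g t) ζ]
  exact ⟨hs ξ, (hs ξ).trans (hs (x t)).symm⟩

/-- Lemma 2 of the paper: if `P` and `p` satisfy the Lyapunov-type differential
equations along the process `(x,u)`, then `s(t,·,u(t))` is constant in the state
variable, equal to `p(t)ᵀ(B(t)u(t)+g(t)) + ½u(t)ᵀR(t)u(t)`; in particular it
attains its maximum at `x(t)`. -/
theorem cbqr_s_state_independent {n nu : ℕ} (tf : ℝ) (htf : 0 < tf)
    (A : ℝ → Matrix (Fin n) (Fin n) ℝ) (B : ℝ → Matrix (Fin n) (Fin nu) ℝ)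
    (N : Fin nu → ℝ → Matrix (Fin n) (Fin n) ℝ) (g : ℝ → Fin n → ℝ)
    (Q : ℝ → Matrix (Fin n) (Fin n) ℝ) (R : ℝ → Matrix (Fin nu) (Fin nu) ℝ)
    (hQ : ∀ t, (Q t).PosSemidef) (hR : ∀ t, (R t).PosSemidef)
    (x : ℝ → Fin n → ℝ) (u : ℝ → Fin nu → ℝ)
    -- `(x,u)` is an admissible process of the bilinear state equation
    (hxode : ∀ t ∈ Ioo 0 tf, HasDerivAt x (fBil A B N g t (x t) (u t)) t)
    (P : ℝ → Matrix (Fin n) (Fin n) ℝ) (p : ℝ → Fin n → ℝ)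
    (hPsymm : ∀ t, (P t).IsSymm)
    -- `Ṗ(t) = -P(t)(A(t)+{uN(t)}) - (A(t)+{uN(t)})ᵀP(t) - Q(t)` on `(0,t_f)`
    (hP : ∀ t ∈ Ioo 0 tf, ∀ i j, HasDerivAt (fun τ => P τ i j)
        ((-(P t * (A t + uN N (u t) t)) - (A t + uN N (u t) t)ᵀ * P t - Q t) i j) t)
    -- `ṗ(t) = -(A(t)+{uN(t)})ᵀp(t) - P(t)(B(t)u(t)+g(t))` on `(0,t_f)`
    (hp : ∀ t ∈ Ioo 0 tf, ∀ i, HasDerivAt (fun τ => p τ i)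
        ((-((A t + uN N (u t) t)ᵀ *ᵥ p t) - P t *ᵥ (B t *ᵥ u t + g t)) i) t) :
    ∀ t ∈ Ioo 0 tf, ∀ ξ : Fin n → ℝ,
      sCBQR A B N g Q R P p t ξ (u t) =
          p t ⬝ᵥ (B t *ᵥ u t + g t) + (1 / 2) * (u t ⬝ᵥ (R t *ᵥ u t)) ∧
      sCBQR A B N g Q R P p t ξ (u t) = sCBQR A B N g Q R P p t (x t) (u t) :=
  cbqr_s_state_independent_general tf A B N g Q R x u P p hPsymm hP hp
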